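/- Let (B,Δ,ε,1,μ) be a nonassociative C³I-bialgebra over K which is left-unital, i.e. μ(1⊗a) = a for all a ∈ B, and whose underlying C³-coalgebra is connected. Then B is left-regular: there exists a K-linear map μ′ : B⊗B → B with Σ μ(a⁽¹⁾⊗μ′(a⁽²⁾⊗b)) = ε(a)b = Σ μ′(a⁽¹⁾⊗μ(a⁽²⁾⊗b)) for all a,b ∈ B. -/

import Mathlib

/-!
Through the coalgebra structure, left multiplication `f a = μ(a ⊗ -)` is an element of the
convolution algebra `Hom(B, End B)`, and a left-regular witness is exactly the uncurried form of a
two-sided convolution inverse of `f`. Left unitality gives `f 1 = id`, so `d = 1 - f` kills the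
coaugmentation; since `Δ x - x ⊗ 1 - 1 ⊗ x ∈ B₍ₖ₎ ⊗ B₍ₖ₎` for `x ∈ B₍ₖ₊₁₎`, the convolution power
`d^(k+1)` vanishes on `B₍ₖ₎`. On a connected coalgebra the geometric series `∑ dⁱ` is therefore
pointwise finite, and it inverts `f = 1 - d` on both sides.
-/

open TensorProduct

namespace RackPaper

variable (K : Type*) [CommRing K]
variable (B : Type*) [AddCommGroup B] [Module K B]

/-- Comultiplication of the tensor-product coalgebra `B ⊗ B`. -/
noncomputable def comul2 (comul : B →ₗ[K] B ⊗[K] B) :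
    B ⊗[K] B →ₗ[K] (B ⊗[K] B) ⊗[K] (B ⊗[K] B) :=
  (tensorTensorTensorComm K B B B B).toLinearMap ∘ₗ TensorProduct.map comul comul

/-- Counit of the tensor-product coalgebra `B ⊗ B`. -/
noncomputable def counit2 (counit : B →ₗ[K] K) : B ⊗[K] B →ₗ[K] K :=
  (LinearMap.mul' K K) ∘ₗ TensorProduct.map counit counit

/-- `(B, comul, counit, one)` is a coassociative counital coaugmented coalgebra. -/
structure IsC3Coalgebra (comul : B →ₗ[K] B ⊗[K] B) (counit : B →ₗ[K] K) (one : B) : Prop where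
  coassoc : (TensorProduct.assoc K B B B).toLinearMap ∘ₗ
      (TensorProduct.map comul LinearMap.id) ∘ₗ comul
      = (TensorProduct.map LinearMap.id comul) ∘ₗ comul
  counit_comul : (TensorProduct.lid K B).toLinearMap ∘ₗ
      (TensorProduct.map counit LinearMap.id) ∘ₗ comul = LinearMap.id
  comul_counit : (TensorProduct.rid K B).toLinearMap ∘ₗ
      (TensorProduct.map LinearMap.id counit) ∘ₗ comul = LinearMap.id
  comul_one : comul one = one ⊗ₜ[K] one
  counit_one : counit one = 1

/-- A nonassociative C³I-bialgebra: a C³-coalgebra with a multiplication which is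
a morphism of C³-coalgebras. -/
structure IsC3IBialgebra (comul : B →ₗ[K] B ⊗[K] B) (counit : B →ₗ[K] K) (one : B)
    (mul : B ⊗[K] B →ₗ[K] B) : Prop where
  isC3 : IsC3Coalgebra K B comul counit one
  comul_mul : comul ∘ₗ mul = (TensorProduct.map mul mul) ∘ₗ comul2 K B comul
  counit_mul : counit ∘ₗ mul = counit2 K B counit
  mul_one_one : mul (one ⊗ₜ[K] one) = one

/-- `μ'` witnesses the left-regularity of `(B, Δ, ε, 1, μ)`:
`Σ μ(a⁽¹⁾ ⊗ μ'(a⁽²⁾ ⊗ b)) = ε(a) b = Σ μ'(a⁽¹⁾ ⊗ μ(a⁽²⁾ ⊗ b))`. -/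
def LeftRegularWitness (comul : B →ₗ[K] B ⊗[K] B) (counit : B →ₗ[K] K)
    (mul mul' : B ⊗[K] B →ₗ[K] B) : Prop :=
  (mul ∘ₗ TensorProduct.map LinearMap.id mul' ∘ₗ (TensorProduct.assoc K B B B).toLinearMap ∘ₗ
      TensorProduct.map comul LinearMap.id
    = (TensorProduct.lid K B).toLinearMap ∘ₗ TensorProduct.map counit LinearMap.id) ∧
  (mul' ∘ₗ TensorProduct.map LinearMap.id mul ∘ₗ (TensorProduct.assoc K B B B).toLinearMap ∘ₗ
      TensorProduct.map comul LinearMap.id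
    = (TensorProduct.lid K B).toLinearMap ∘ₗ TensorProduct.map counit LinearMap.id)

/-- The linear map `x ↦ Δ(x) - x ⊗ 1 - 1 ⊗ x`. -/
noncomputable def deltaPrime (comul : B →ₗ[K] B ⊗[K] B) (one : B) : B →ₗ[K] B ⊗[K] B :=
  comul - ((TensorProduct.mk K B B).flip one) - (TensorProduct.mk K B B one)

/-- The subcoalgebra of order `k`:  `B₍₀₎ = K·1` and
`B₍ₖ₊₁₎ = {x | Δ(x) - x ⊗ 1 - 1 ⊗ x ∈ B₍ₖ₎ ⊗ B₍ₖ₎}`. -/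
noncomputable def ordSub (comul : B →ₗ[K] B ⊗[K] B) (one : B) : ℕ → Submodule K B
  | 0 => Submodule.span K {one}
  | k + 1 => Submodule.comap (deltaPrime K B comul one)
      (LinearMap.range (TensorProduct.mapIncl (ordSub comul one k) (ordSub comul one k)))

open Coalgebra WithConv

variable {K B}

abbrev IsC3Coalgebra.toCoalgebra {comul : B →ₗ[K] B ⊗[K] B} {counit : B →ₗ[K] K} {one : B}
    (h : IsC3Coalgebra K B comul counit one) : Coalgebra K B where
  comul := comul
  counit := counit
  coassoc := h.coassoc
  rTensor_counit_comp_comul := by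
    ext x
    apply (TensorProduct.lid K B).injective
    simpa [LinearMap.rTensor] using congr($h.counit_comul x)
  lTensor_counit_comp_comul := by
    ext x
    apply (TensorProduct.rid K B).injective
    simpa [LinearMap.lTensor] using congr($h.comul_counit x)

section Filtration

variable {comul : B →ₗ[K] B ⊗[K] B} {one : B}

lemma comul_eq_of_mem_ordSub_succ {x : B} {k : ℕ} (hx : x ∈ ordSub K B comul one (k + 1)) :
    ∃ t, comul x = mapIncl (ordSub K B comul one k) (ordSub K B comul one k) t
      + x ⊗ₜ one + one ⊗ₜ x := by
  obtain ⟨t, ht⟩ := hx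
  refine ⟨t, ?_⟩
  rw [ht, deltaPrime]
  simp only [LinearMap.sub_apply, LinearMap.flip_apply, mk_apply]
  abel

lemma one_mem_ordSub (hone : comul one = one ⊗ₜ one) (k : ℕ) :
    one ∈ ordSub K B comul one k := by
  induction k with
  | zero => exact Submodule.mem_span_singleton_self one
  | succ k ih =>
    refine ⟨-((⟨one, ih⟩ : ordSub K B comul one k) ⊗ₜ ⟨one, ih⟩), ?_⟩
    simp [deltaPrime, hone]

lemma ordSub_mono (hone : comul one = one ⊗ₜ one) : Monotone (ordSub K B comul one) := by
  refine monotone_nat_of_le_succ fun k => ?_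
  induction k with
  | zero => exact (Submodule.span_singleton_le_iff_mem _ _).mpr (one_mem_ordSub hone 1)
  | succ k ih => exact Submodule.comap_mono (range_mapIncl_mono ih ih)

end Filtration

lemma map_mapIncl_eq_zero_of_le_ker_right {R M N P Q : Type*} [CommSemiring R]
    [AddCommMonoid M] [Module R M] [AddCommMonoid N] [Module R N] [AddCommMonoid P] [Module R P]
    [AddCommMonoid Q] [Module R Q] (f : M →ₗ[R] P) {g : N →ₗ[R] Q} {p : Submodule R M}
    {q : Submodule R N} (hq : q ≤ LinearMap.ker g) (t : p ⊗[R] q) :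
    map f g (mapIncl p q t) = 0 := by
  rw [← LinearMap.comp_apply, mapIncl, ← map_comp,
    LinearMap.le_ker_iff_comp_subtype_eq_zero.mp hq, map_zero_right, LinearMap.zero_apply]

lemma map_mapIncl_eq_zero_of_le_ker_left {R M N P Q : Type*} [CommSemiring R]
    [AddCommMonoid M] [Module R M] [AddCommMonoid N] [Module R N] [AddCommMonoid P] [Module R P]
    [AddCommMonoid Q] [Module R Q] {f : M →ₗ[R] P} (g : N →ₗ[R] Q) {p : Submodule R M}
    {q : Submodule R N} (hp : p ≤ LinearMap.ker f) (t : p ⊗[R] q) :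
    map f g (mapIncl p q t) = 0 := by
  rw [← LinearMap.comp_apply, mapIncl, ← map_comp,
    LinearMap.le_ker_iff_comp_subtype_eq_zero.mp hp, map_zero_left, LinearMap.zero_apply]

section Convolution

variable {A : Type*} [Semiring A] [Algebra K A] [Coalgebra K B] {one : B}

lemma convMul_apply_one (hone : comul one = one ⊗ₜ[K] one) (φ ψ : WithConv (B →ₗ[K] A)) :
    (φ * ψ) one = φ one * ψ one := by
  simp [hone]

lemma ordSub_succ_le_ker_convMul (hone : comul one = one ⊗ₜ[K] one)
    {φ ψ : WithConv (B →ₗ[K] A)} (hφ : φ one = 0) {k : ℕ}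
    (hψ : ordSub K B comul one k ≤ LinearMap.ker ψ.ofConv) :
    ordSub K B comul one (k + 1) ≤ LinearMap.ker (φ * ψ).ofConv := by
  intro x hx
  obtain ⟨t, ht⟩ := comul_eq_of_mem_ordSub_succ hx
  have hψ₁ : ψ one = 0 := hψ (one_mem_ordSub hone k)
  simp [ht, map_mapIncl_eq_zero_of_le_ker_right _ hψ, hφ, hψ₁]

lemma ordSub_le_ker_convMul_of_le_ker_right (hone : comul one = one ⊗ₜ[K] one)
    (φ : WithConv (B →ₗ[K] A)) {ψ : WithConv (B →ₗ[K] A)} {k : ℕ}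
    (hψ : ordSub K B comul one k ≤ LinearMap.ker ψ.ofConv) :
    ordSub K B comul one k ≤ LinearMap.ker (φ * ψ).ofConv := by
  cases k with
  | zero =>
    refine (Submodule.span_singleton_le_iff_mem _ _).mpr ?_
    have hψ₁ : ψ one = 0 := hψ (one_mem_ordSub hone 0)
    simp [convMul_apply_one hone, hψ₁]
  | succ k =>
    intro x hx
    obtain ⟨t, ht⟩ := comul_eq_of_mem_ordSub_succ hx
    have hψ' := (ordSub_mono hone k.le_succ).trans hψ
    have hψ₁ : ψ one = 0 := hψ (one_mem_ordSub hone _)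
    have hψx : ψ x = 0 := hψ hx
    simp [ht, map_mapIncl_eq_zero_of_le_ker_right _ hψ', hψx, hψ₁]

lemma ordSub_le_ker_convMul_of_le_ker_left (hone : comul one = one ⊗ₜ[K] one)
    {φ : WithConv (B →ₗ[K] A)} (ψ : WithConv (B →ₗ[K] A)) {k : ℕ}
    (hφ : ordSub K B comul one k ≤ LinearMap.ker φ.ofConv) :
    ordSub K B comul one k ≤ LinearMap.ker (φ * ψ).ofConv := by
  cases k with
  | zero =>
    refine (Submodule.span_singleton_le_iff_mem _ _).mpr ?_
    have hφ₁ : φ one = 0 := hφ (one_mem_ordSub hone 0)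
    simp [convMul_apply_one hone, hφ₁]
  | succ k =>
    intro x hx
    obtain ⟨t, ht⟩ := comul_eq_of_mem_ordSub_succ hx
    have hφ' := (ordSub_mono hone k.le_succ).trans hφ
    have hφ₁ : φ one = 0 := hφ (one_mem_ordSub hone _)
    have hφx : φ x = 0 := hφ hx
    simp [ht, map_mapIncl_eq_zero_of_le_ker_left _ hφ', hφx, hφ₁]

lemma ordSub_le_ker_pow_succ (hone : comul one = one ⊗ₜ[K] one) {d : WithConv (B →ₗ[K] A)}
    (hd : d one = 0) (k : ℕ) : ordSub K B comul one k ≤ LinearMap.ker (d ^ (k + 1)).ofConv := by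
  induction k with
  | zero => exact (Submodule.span_singleton_le_iff_mem one _).mpr (by simpa using hd)
  | succ k ih => rw [pow_succ']; exact ordSub_succ_le_ker_convMul hone hd ih

end Convolution

lemma exists_linearMap_eq_of_apply_stable {R M N : Type*} [Semiring R] [AddCommMonoid M]
    [Module R M] [AddCommMonoid N] [Module R N] {S : ℕ → Submodule R M} (hS : ∀ x, ∃ k, x ∈ S k)
    (p : ℕ → M →ₗ[R] N) (hp : ∀ k, ∀ x ∈ S k, ∀ m, k ≤ m → p m x = p k x) :
    ∃ h : M →ₗ[R] N, ∀ k, ∀ x ∈ S k, h x = p k x := by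
  choose n hn using hS
  have hpn : ∀ x m, n x ≤ m → p m x = p (n x) x := fun x m hm => hp _ x (hn x) m hm
  refine ⟨{ toFun x := p (n x) x, map_add' x y := ?_, map_smul' c x := ?_ }, fun k x hx => ?_⟩
  · let m := max (n (x + y)) (max (n x) (n y))
    rw [← hpn (x + y) m (by omega), ← hpn x m (by omega), ← hpn y m (by omega), map_add]
  · let m := max (n (c • x)) (n x)
    rw [← hpn (c • x) m (by omega), ← hpn x m (by omega), map_smul]
    rfl
  · show p (n x) x = p k x
    rw [← hpn x (max (n x) k) (by omega), hp k x hx _ (by omega)]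

section Inverse

variable {A : Type*} [Ring A] [Algebra K A] [Coalgebra K B] {one : B}

theorem isUnit_of_apply_one_eq_one (hone : comul one = one ⊗ₜ[K] one)
    (hε : counit (R := K) one = 1)
    (hconn : ∀ x, ∃ k, x ∈ ordSub K B comul one k) {φ : WithConv (B →ₗ[K] A)}
    (hφ : φ one = 1) : IsUnit φ := by
  set d := 1 - φ
  have hd : d one = 0 := by simp [d, hε, hφ]
  have hdk := ordSub_le_ker_pow_succ hone hd
  let P : ℕ → WithConv (B →ₗ[K] A) := fun k => ∑ i ∈ Finset.range (k + 1), d ^ i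
  have hP : ∀ k, ∀ x ∈ ordSub K B comul one k, ∀ m, k ≤ m → P m x = P k x := by
    intro k x hx m hm
    induction m, hm using Nat.le_induction with
    | base => rfl
    | succ m hkm ih =>
      have hx_succ : (d ^ (m + 1)) x = 0 := hdk m (ordSub_mono hone hkm hx)
      rw [show P (m + 1) = P m + d ^ (m + 1) from Finset.sum_range_succ _ _]
      simpa [hx_succ] using ih
  obtain ⟨h, hh⟩ := exists_linearMap_eq_of_apply_stable hconn (fun k => (P k).ofConv) hP
  have hPk : ∀ k, ordSub K B comul one k ≤ LinearMap.ker (toConv h - P k).ofConv :=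
    fun k x hx => by simp [hh k x hx]
  have hgeom : ∀ k, ∀ x ∈ ordSub K B comul one k,
      (1 - d ^ (k + 1)) x = (1 : WithConv (B →ₗ[K] A)) x :=
    fun k x hx => by simp [LinearMap.mem_ker.mp (hdk k hx)]
  have hφd : φ = 1 - d := (sub_sub_cancel 1 φ).symm
  refine ⟨⟨φ, toConv h, ?_, ?_⟩, rfl⟩
  · ext x
    obtain ⟨k, hk⟩ := hconn x
    calc (φ * toConv h) x = (φ * P k) x + (φ * (toConv h - P k)) x := by simp [mul_sub]
      _ = (1 - d ^ (k + 1)) x := by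
        rw [ordSub_le_ker_convMul_of_le_ker_right hone φ (hPk k) hk, hφd, mul_neg_geom_sum,
          add_zero]
      _ = _ := hgeom k x hk
  · ext x
    obtain ⟨k, hk⟩ := hconn x
    calc (toConv h * φ) x = (P k * φ) x + ((toConv h - P k) * φ) x := by simp [sub_mul]
      _ = (1 - d ^ (k + 1)) x := by
        rw [ordSub_le_ker_convMul_of_le_ker_left hone φ (hPk k) hk, hφd, geom_sum_mul_neg,
          add_zero]
      _ = _ := hgeom k x hk

end Inverse

section Witness

variable [Coalgebra K B] {M : Type*} [AddCommGroup M] [Module K M]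

lemma lift_convMul (φ ψ : WithConv (B →ₗ[K] Module.End K M)) :
    lift φ.ofConv ∘ₗ map LinearMap.id (lift ψ.ofConv) ∘ₗ
      (TensorProduct.assoc K B B M).toLinearMap ∘ₗ map comul LinearMap.id
      = lift (φ * ψ).ofConv :=
  TensorProduct.ext' fun a m => by
    simp [(ℛ K a).convMul_apply, ← (ℛ K a).eq, sum_tmul]

lemma lift_convOne :
    lift (1 : WithConv (B →ₗ[K] Module.End K M)).ofConv
      = (TensorProduct.lid K M).toLinearMap ∘ₗ map counit LinearMap.id :=
  TensorProduct.ext' fun a b => by simp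

lemma leftRegularWitness_of_convMul_eq_one {mul : B ⊗[K] B →ₗ[K] B}
    {ψ : WithConv (B →ₗ[K] Module.End K B)} (h₁ : toConv (curry mul) * ψ = 1)
    (h₂ : ψ * toConv (curry mul) = 1) :
    LeftRegularWitness K B comul counit mul (lift ψ.ofConv) := by
  have hmul : lift (curry mul) = mul := TensorProduct.ext' fun _ _ => rfl
  constructor
  · rw [← hmul, ← lift_convOne, ← h₁, ← lift_convMul]
  · rw [← hmul, ← lift_convOne, ← h₂, ← lift_convMul]

end Witness

theorem connected_left_unital_is_left_regular_general
    (K : Type*) [CommRing K]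
    (B : Type*) [AddCommGroup B] [Module K B]
    (comul : B →ₗ[K] B ⊗[K] B) (counit : B →ₗ[K] K) (one : B) (mul : B ⊗[K] B →ₗ[K] B)
    (hB : IsC3IBialgebra K B comul counit one mul)
    (left_unital : ∀ a : B, mul (one ⊗ₜ[K] a) = a)
    (connected : ∀ x : B, ∃ k : ℕ, x ∈ ordSub K B comul one k) :
    ∃ mul' : B ⊗[K] B →ₗ[K] B, LeftRegularWitness K B comul counit mul mul' := by
  let _ : Coalgebra K B := hB.isC3.toCoalgebra
  have hunit : IsUnit (toConv (curry mul) : WithConv (B →ₗ[K] Module.End K B)) :=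
    isUnit_of_apply_one_eq_one hB.isC3.comul_one hB.isC3.counit_one connected
      (LinearMap.ext left_unital)
  obtain ⟨ψ, h₁, h₂⟩ := isUnit_iff_exists.mp hunit
  exact ⟨_, leftRegularWitness_of_convMul_eq_one h₁ h₂⟩

/-- Let `(B, Δ, ε, 1, μ)` be a nonassociative C³I-bialgebra over `K` which
is left-unital, i.e. `μ(1 ⊗ a) = a` for all `a ∈ B`, and whose underlying C³-coalgebra is
connected (every element lies in some subcoalgebra of finite order).  Then `B` is
left-regular: there exists a `K`-linear map `μ' : B ⊗ B → B` with
`Σ μ(a⁽¹⁾ ⊗ μ'(a⁽²⁾ ⊗ b)) = ε(a) b = Σ μ'(a⁽¹⁾ ⊗ μ(a⁽²⁾ ⊗ b))` for all `a, b ∈ B`. -/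
theorem connected_left_unital_is_left_regular
    (K : Type*) [CommRing K] [Algebra ℚ K]
    (B : Type*) [AddCommGroup B] [Module K B]
    (comul : B →ₗ[K] B ⊗[K] B) (counit : B →ₗ[K] K) (one : B) (mul : B ⊗[K] B →ₗ[K] B)
    (hB : IsC3IBialgebra K B comul counit one mul)
    (left_unital : ∀ a : B, mul (one ⊗ₜ[K] a) = a)
    (connected : ∀ x : B, ∃ k : ℕ, x ∈ ordSub K B comul one k) :
    ∃ mul' : B ⊗[K] B →ₗ[K] B, LeftRegularWitness K B comul counit mul mul' :=
  connected_left_unital_is_left_regular_general K B comul counit one mul hB left_unital connected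

end RackPaper
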